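/- arXiv:2401.13118 — 5 statements merged into one kernel-verified Lean document; each statement's English description precedes it below -/
import Mathlib

section
/- For every integer y ≥ 1, there exists θ ∈ [0,1] such that ∑_{q=y+1}^{2y} 1/q = log 2 − 1/(4y + 2θ). Equivalently, log 2 − 1/(4y) ≤ ∑_{q=y+1}^{2y} 1/q ≤ log 2 − 1/(4y+2). -/
open Filter Real Topology

noncomputable def Sy (n : ℕ) : ℝ := ∑ q ∈ Finset.Icc (n + 1) (2 * n), (1 : ℝ) / q

lemma Sy_eq_harmonic (n : ℕ) : Sy n = (harmonic (2 * n) : ℝ) - (harmonic n : ℝ) := by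
  have h1 : ∀ m : ℕ, (harmonic m : ℝ) = ∑ i ∈ Finset.Ioc 0 m, (1 : ℝ) / i := by
    intro m
    rw [harmonic_eq_sum_Icc]
    push_cast
    rw [show Finset.Icc 1 m = Finset.Ioc 0 m from rfl]
    simp [one_div]
  rw [h1, h1, eq_sub_iff_add_eq, Sy]
  rw [show Finset.Icc (n + 1) (2 * n) = Finset.Ioc n (2 * n) from (Finset.Icc_add_one_left_eq_Ioc _ _)]
  rw [add_comm]
  exact Finset.sum_Ioc_consecutive _ (Nat.zero_le n) (by omega)

lemma Sy_succ (k : ℕ) :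
    Sy (k + 1) = Sy k + (1 / (2 * k + 1) - 1 / (2 * k + 2) : ℝ) := by
  rw [Sy_eq_harmonic, Sy_eq_harmonic]
  have h2 : 2 * (k + 1) = (2 * k + 1) + 1 := by ring
  rw [h2, harmonic_succ, harmonic_succ, harmonic_succ]
  push_cast
  have hk1 : ((k : ℝ) + 1) ≠ 0 := by positivity
  have hk2 : (2 * (k : ℝ) + 1) ≠ 0 := by positivity
  have hk3 : (2 * (k : ℝ) + 2) ≠ 0 := by positivity
  field_simp
  ring

lemma Sy_tendsto : Tendsto Sy atTop (𝓝 (Real.log 2)) := by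
  have h2 : Tendsto (fun n : ℕ => 2 * n) atTop atTop :=
    Tendsto.comp (tendsto_id.const_mul_atTop' two_pos) tendsto_id
  have ht : Tendsto (fun n : ℕ => ((harmonic (2 * n) : ℝ) - Real.log (2 * n))
      - ((harmonic n : ℝ) - Real.log n) + Real.log 2) atTop (𝓝 (Real.log 2)) := by
    have := ((tendsto_harmonic_sub_log.comp h2).sub tendsto_harmonic_sub_log).add_const
      (Real.log 2)
    simpa using this
  apply ht.congr'
  filter_upwards [eventually_ge_atTop 1] with n hn
  have hn0 : (n : ℝ) ≠ 0 := by positivity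
  rw [Sy_eq_harmonic]
  push_cast
  rw [Real.log_mul (by norm_num) hn0]
  ring

lemma Sy_diff_bounds (y N : ℕ) (hy : 1 ≤ y) (hN : y ≤ N) :
    (1 / (4 * y + 2) - 1 / (4 * N + 2) : ℝ) ≤ Sy N - Sy y ∧
    Sy N - Sy y ≤ (1 / (4 * y) - 1 / (4 * N) : ℝ) := by
  induction N, hN using Nat.le_induction with
  | base => simp
  | succ k hk ih =>
    obtain ⟨ih1, ih2⟩ := ih
    have hk' : (1 : ℝ) ≤ (k : ℝ) := by exact_mod_cast hy.trans hk
    have hkpos : (0 : ℝ) < (k : ℝ) := by linarith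
    have step1 : (1 / (4 * k + 2) - 1 / (4 * (k + 1) + 2) : ℝ)
        ≤ 1 / (2 * k + 1) - 1 / (2 * k + 2) := by
      rw [div_sub_div _ _ (by positivity) (by positivity),
        div_sub_div _ _ (by positivity) (by positivity),
        div_le_div_iff₀ (by positivity) (by positivity)]
      nlinarith [sq_nonneg ((k : ℝ))]
    have step2 : (1 / (2 * k + 1) - 1 / (2 * k + 2) : ℝ)
        ≤ 1 / (4 * k) - 1 / (4 * (k + 1)) := by
      rw [div_sub_div _ _ (by positivity) (by positivity),
        div_sub_div _ _ (by positivity) (by positivity),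
        div_le_div_iff₀ (by positivity) (by positivity)]
      nlinarith [sq_nonneg ((k : ℝ))]
    rw [Sy_succ]
    push_cast
    constructor <;> push_cast at ih1 ih2 ⊢ <;> linarith

theorem sum_inv_Icc_eq_log_two (y : ℕ) (hy : 1 ≤ y) :
    ∃ θ ∈ Set.Icc (0:ℝ) 1,
      ∑ q ∈ Finset.Icc (y + 1) (2 * y), (1 : ℝ) / q
        = Real.log 2 - 1 / (4 * y + 2 * θ) := by
  have hy' : (1 : ℝ) ≤ (y : ℝ) := by exact_mod_cast hy
  set g : ℝ := Real.log 2 - Sy y with hg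
  -- limits of 1/(4N+2) and 1/(4N)
  have hlim0 : Tendsto (fun N : ℕ => (1 / (4 * (N : ℝ) + 2) : ℝ)) atTop (𝓝 0) := by
    apply Tendsto.div_atTop tendsto_const_nhds
    apply Filter.tendsto_atTop_add_const_right
    exact Tendsto.comp (tendsto_id.const_mul_atTop' (by norm_num : (0:ℝ) < 4))
      tendsto_natCast_atTop_atTop
  have hlim1 : Tendsto (fun N : ℕ => (1 / (4 * (N : ℝ)) : ℝ)) atTop (𝓝 0) := by
    apply Tendsto.div_atTop tendsto_const_nhds
    exact Tendsto.comp (tendsto_id.const_mul_atTop' (by norm_num : (0:ℝ) < 4))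
      tendsto_natCast_atTop_atTop
  have hglb : (1 / (4 * (y : ℝ) + 2) : ℝ) ≤ g := by
    have h := le_of_tendsto_of_tendsto
      (f := fun N : ℕ => (1 / (4 * (y : ℝ) + 2) - 1 / (4 * (N : ℝ) + 2) : ℝ))
      (g := fun N : ℕ => Sy N - Sy y) (by simpa using (tendsto_const_nhds.sub hlim0))
      (Sy_tendsto.sub_const (Sy y)) ?_
    · rw [one_div]; linarith [h]
    · filter_upwards [eventually_ge_atTop y] with N h
      exact_mod_cast (Sy_diff_bounds y N hy h).1
  have hgub : g ≤ (1 / (4 * (y : ℝ)) : ℝ) := by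
    have h := le_of_tendsto_of_tendsto
      (f := fun N : ℕ => Sy N - Sy y)
      (g := fun N : ℕ => (1 / (4 * (y : ℝ)) - 1 / (4 * (N : ℝ)) : ℝ))
      (Sy_tendsto.sub_const (Sy y)) (by simpa using (tendsto_const_nhds.sub hlim1)) ?_
    · rw [one_div, mul_inv, mul_comm]; linarith [h]
    · filter_upwards [eventually_ge_atTop y] with N h
      exact_mod_cast (Sy_diff_bounds y N hy h).2
  have hgpos : 0 < g := lt_of_lt_of_le (by positivity) hglb
  refine ⟨(1 / g - 4 * y) / 2, ⟨?_, ?_⟩, ?_⟩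
  · have : 4 * (y : ℝ) ≤ 1 / g := by
      rw [le_div_iff₀ hgpos]
      calc 4 * (y : ℝ) * g ≤ 4 * y * (1 / (4 * y)) := by
            apply mul_le_mul_of_nonneg_left hgub (by positivity)
        _ = 1 := by field_simp
    linarith
  · have : 1 / g ≤ 4 * (y : ℝ) + 2 := by
      rw [div_le_iff₀ hgpos]
      calc (1 : ℝ) = (4 * y + 2) * (1 / (4 * y + 2)) := by field_simp
        _ ≤ (4 * y + 2) * g := by
            apply mul_le_mul_of_nonneg_left hglb (by positivity)
    linarith
  · have heq : 4 * (y : ℝ) + 2 * ((1 / g - 4 * y) / 2) = 1 / g := by ring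
    rw [heq, one_div_one_div]
    show Sy y = Real.log 2 - g
    rw [hg]; ring
end

section
/- For every prime power p^k with p odd, the number of pairs (m₁, m₂) ∈ (ℤ/p^kℤ)² with m₁² = m₂² equals (1 + k − k/p)·p^k, i.e. equals p^k + k(p^k − p^{k−1}). -/
open Finset
open scoped Nat

/-! Since `2` is a unit modulo an odd `n`, the substitution `(x, y) ↦ (x - y, x + y)` turns
`x² = y²` into `a * b = 0`. For fixed `a` the solutions `b` form the kernel of multiplication by `a`,
whose image is the cyclic subgroup generated by `a`, of order `n / gcd(n, a)`; so there are
`gcd(n, a)` of them, and the count is `∑_{i < n} gcd(n, i) = ∑_{d ∣ n} d φ(n / d)`. For `n = p^k` the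
divisors `p^i` with `i < k` each contribute `p^(k-1) (p - 1)`, and `p^k` itself contributes `p^k`. -/

def sqEqSqEquivMulEqZero (R : Type*) [CommRing R] [Invertible (2 : R)] :
    {x : R × R | x.1 ^ 2 = x.2 ^ 2} ≃ {x : R × R | x.1 * x.2 = 0} :=
  Equiv.subtypeEquiv
    { toFun := fun x => (x.1 - x.2, x.1 + x.2)
      invFun := fun y => (⅟2 * (y.1 + y.2), ⅟2 * (y.2 - y.1))
      left_inv := fun x => Prod.ext
        (by linear_combination x.1 * invOf_mul_self (2 : R))
        (by linear_combination x.2 * invOf_mul_self (2 : R))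
      right_inv := fun y => Prod.ext
        (by linear_combination y.1 * invOf_mul_self (2 : R))
        (by linear_combination y.2 * invOf_mul_self (2 : R)) }
    fun x => show x.1 ^ 2 = x.2 ^ 2 ↔ (x.1 - x.2) * (x.1 + x.2) = 0 by
      constructor <;> intro h <;> linear_combination h

theorem ZMod.card_mul_eq_zero (n : ℕ) [NeZero n] (a : ZMod n) :
    Nat.card {b : ZMod n // a * b = 0} = n.gcd a.val := by
  have hrange : (AddMonoidHom.mulLeft a).range = AddSubgroup.zmultiples a := by
    ext b
    simp only [AddMonoidHom.mem_range, AddMonoidHom.coe_mulLeft, AddSubgroup.mem_zmultiples_iff,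
      zsmul_eq_mul, ZMod.intCast_surjective.exists, mul_comm a]
  have horder : addOrderOf a = n / n.gcd a.val := by
    simpa using ZMod.addOrderOf_coe a.val (NeZero.ne n)
  have hcard : Nat.card {b : ZMod n // a * b = 0} * (n / n.gcd a.val) = n := by
    rw [← horder, ← Nat.card_zmultiples, ← hrange, ← AddSubgroup.index_ker]
    exact (AddMonoidHom.mulLeft a).ker.card_mul_index.trans (Nat.card_zmod n)
  refine Nat.eq_of_mul_eq_mul_right (horder ▸ addOrderOf_pos a) ?_
  rw [hcard, Nat.mul_div_cancel' (n.gcd_dvd_left _)]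

theorem Nat.sum_range_gcd (n : ℕ) :
    ∑ i ∈ range n, n.gcd i = ∑ d ∈ n.divisors, d * φ (n / d) := by
  rcases n.eq_zero_or_pos with rfl | hn
  · simp
  refine (sum_fiberwise_of_maps_to' (g := n.gcd)
    (fun i _ => mem_divisors.2 ⟨n.gcd_dvd_left i, hn.ne'⟩) id).symm.trans
    (sum_congr rfl fun d hd => ?_)
  rw [sum_const, smul_eq_mul, id, ← totient_div_of_dvd (dvd_of_mem_divisors hd), mul_comm]

theorem ZMod.card_pairs_mul_eq_zero (n : ℕ) [NeZero n] :
    Nat.card {x : ZMod n × ZMod n | x.1 * x.2 = 0} = ∑ d ∈ n.divisors, d * φ (n / d) := by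
  let e := Equiv.subtypeProdEquivSigmaSubtype fun a b : ZMod n => a * b = 0
  refine (Nat.card_congr e).trans ?_
  rw [Nat.card_sigma, ← Nat.sum_range_gcd]
  simp_rw [ZMod.card_mul_eq_zero]
  exact sum_nbij' ZMod.val Nat.cast (fun a _ => mem_range.2 a.val_lt) (fun _ _ => mem_univ _)
    (fun a _ => ZMod.natCast_zmod_val a) (fun i hi => ZMod.val_cast_of_lt (mem_range.1 hi))
    fun _ _ => rfl

theorem Nat.sum_divisors_prime_pow_mul_totient_div {p : ℕ} (hp : p.Prime) (k : ℕ) :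
    ∑ d ∈ (p ^ k).divisors, d * φ (p ^ k / d) = p ^ k + k * (p ^ k - p ^ (k - 1)) := by
  have hterm : ∀ i ∈ range k, p ^ i * φ (p ^ k / p ^ i) = p ^ k - p ^ (k - 1) := by
    intro i hi
    obtain ⟨j, rfl⟩ := Nat.exists_eq_add_of_lt (mem_range.1 hi)
    rw [Nat.pow_div (by omega) hp.pos, show i + j + 1 - i = j + 1 by omega,
      totient_prime_pow_succ hp, ← mul_assoc, ← pow_add, Nat.mul_sub_one, ← pow_succ,
      show i + j + 1 - 1 = i + j by omega]
  rw [sum_divisors_prime_pow hp, sum_range_succ, sum_congr rfl hterm, sum_const, card_range,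
    smul_eq_mul, Nat.div_self (pow_pos hp.pos k), totient_one, mul_one, add_comm]

theorem ZMod.card_sq_eq_sq_of_odd {n : ℕ} (hn : Odd n) :
    Nat.card {x : ZMod n × ZMod n | x.1 ^ 2 = x.2 ^ 2} = ∑ d ∈ n.divisors, d * φ (n / d) := by
  have : NeZero n := ⟨hn.pos.ne'⟩
  have h2 : IsUnit (2 : ZMod n) := by
    simpa using (ZMod.isUnit_iff_coprime 2 n).2 (Nat.coprime_two_left.2 hn)
  let := h2.invertible
  rw [Nat.card_congr (sqEqSqEquivMulEqZero (ZMod n)), ZMod.card_pairs_mul_eq_zero]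

theorem card_sq_eq_sq_odd_prime_pow_general (p k : ℕ) (hp : p.Prime) (hodd : Odd p) :
    Nat.card {x : ZMod (p ^ k) × ZMod (p ^ k) | x.1 ^ 2 = x.2 ^ 2}
      = p ^ k + k * (p ^ k - p ^ (k - 1)) := by
  rw [ZMod.card_sq_eq_sq_of_odd hodd.pow, Nat.sum_divisors_prime_pow_mul_totient_div hp]

theorem card_sq_eq_sq_odd_prime_pow (p k : ℕ) (hp : p.Prime) (hodd : Odd p) (hk : 1 ≤ k) :
    Nat.card {x : ZMod (p ^ k) × ZMod (p ^ k) | x.1 ^ 2 = x.2 ^ 2}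
      = p ^ k + k * (p ^ k - p ^ (k - 1)) :=
  card_sq_eq_sq_odd_prime_pow_general p k hp hodd
end

section
/- The double integral over (0,1]² of min(1/2, 1−a)·min(1/2, 1−b)·min((1−a)/b, (1−b)/a) da db equals (7/6)log 2 − 37/72. -/
/-!
For fixed `a` the minimum `min ((1 - a) / b) ((1 - b) / a)` switches where `b (1 - b) = a (1 - a)`,
i.e. at `b = a` and `b = 1 - a`, and `min (1/2) (1 - b)` switches at `b = 1/2`. On each of the
resulting four intervals the integrand is `c (1 - b)`, `c / b`, `c (1 - b) / b` or `c (1 - b)²`,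
so the inner integral is an elementary function of `a`, with one formula for `a ≤ 1/2` and one
for `a > 1/2`. Both formulas have explicit antiderivatives, giving `log 2 / 4 + 23/288` on
`(0, 1/2]` and `11/12 log 2 - 19/32` on `(1/2, 1]`.
-/

open MeasureTheory Set Real

def HasIntervalIntegral (f : ℝ → ℝ) (l r v : ℝ) : Prop :=
  IntervalIntegrable f volume l r ∧ ∫ x in l..r, f x = v

section HasIntervalIntegral

variable {f g F : ℝ → ℝ} {l m r v w : ℝ}

theorem HasIntervalIntegral.add_adjacent (h₁ : HasIntervalIntegral f l m v)
    (h₂ : HasIntervalIntegral f m r w) : HasIntervalIntegral f l r (v + w) :=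
  ⟨h₁.1.trans h₂.1, by rw [← intervalIntegral.integral_add_adjacent_intervals h₁.1 h₂.1, h₁.2, h₂.2]⟩

theorem HasIntervalIntegral.congr_Ioc (h : HasIntervalIntegral g l r v) (hlr : l ≤ r)
    (hfg : EqOn f g (Ioc l r)) : HasIntervalIntegral f l r v := by
  rw [← uIoc_of_le hlr] at hfg
  exact ⟨h.1.congr hfg.symm, by rw [intervalIntegral.integral_congr_ae (ae_of_all _ hfg), h.2]⟩

theorem hasIntervalIntegral_of_hasDerivAt (hlr : l ≤ r) (hF : ContinuousOn F (Icc l r))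
    (hFf : ∀ x ∈ Ioo l r, HasDerivAt F (f x) x) (hf : IntervalIntegrable f volume l r) :
    HasIntervalIntegral f l r (F r - F l) :=
  ⟨hf, intervalIntegral.integral_eq_sub_of_hasDerivAt_of_le hlr hF hFf hf⟩

theorem hasIntervalIntegral_mul_one_sub (c l r : ℝ) :
    HasIntervalIntegral (fun x ↦ c * (1 - x)) l r (c * ((1 - l) ^ 2 - (1 - r) ^ 2) / 2) := by
  refine ⟨(by fun_prop : Continuous fun x : ℝ ↦ c * (1 - x)).intervalIntegrable _ _, ?_⟩
  rw [intervalIntegral.integral_const_mul,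
    intervalIntegral.integral_comp_sub_left (fun x ↦ x), integral_id]
  ring

theorem hasIntervalIntegral_mul_one_sub_sq (c l r : ℝ) :
    HasIntervalIntegral (fun x ↦ c * (1 - x) ^ 2) l r (c * ((1 - l) ^ 3 - (1 - r) ^ 3) / 3) := by
  refine ⟨(by fun_prop : Continuous fun x : ℝ ↦ c * (1 - x) ^ 2).intervalIntegrable _ _, ?_⟩
  rw [intervalIntegral.integral_const_mul,
    intervalIntegral.integral_comp_sub_left (fun x ↦ x ^ 2), integral_pow]
  ring

theorem hasIntervalIntegral_div (c : ℝ) (hl : 0 < l) (hlr : l ≤ r) :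
    HasIntervalIntegral (fun x ↦ c / x) l r (c * (log r - log l)) := by
  have hr := hl.trans_le hlr
  refine ⟨(continuousOn_const.div continuousOn_id fun x hx ↦ ?_).intervalIntegrable, ?_⟩
  · rw [uIcc_of_le hlr] at hx
    exact (hl.trans_le hx.1).ne'
  · simp only [div_eq_mul_inv]
    rw [intervalIntegral.integral_const_mul, integral_inv_of_pos hl hr, log_div hr.ne' hl.ne']

theorem hasIntervalIntegral_mul_one_sub_div (c : ℝ) (hl : 0 < l) (hlr : l ≤ r) :
    HasIntervalIntegral (fun x ↦ c * (1 - x) / x) l r (c * (log r - log l) - c * (r - l)) := by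
  have hdiv := hasIntervalIntegral_div c hl hlr
  have hconst : IntervalIntegrable (fun _ ↦ c) volume l r := intervalIntegrable_const
  refine HasIntervalIntegral.congr_Ioc (g := fun x ↦ c / x - c) ⟨hdiv.1.sub hconst, ?_⟩ hlr
    fun x hx ↦ ?_
  · rw [intervalIntegral.integral_sub hdiv.1 hconst, hdiv.2, intervalIntegral.integral_const,
      smul_eq_mul]
    ring
  · have : x ≠ 0 := (hl.trans hx.1).ne'
    field_simp

end HasIntervalIntegral

theorem log_half : log (1 / 2 : ℝ) = -log 2 := by
  rw [one_div, log_inv]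

noncomputable def integrandA (a b : ℝ) : ℝ :=
  min (1 / 2) (1 - a) * min (1 / 2) (1 - b) * min ((1 - a) / b) ((1 - b) / a)

section InnerIntegral

variable {a b : ℝ}

theorem min_one_sub_div_eq_left (ha : 0 < a) (hb : 0 < b) (h : a * (1 - a) ≤ b * (1 - b)) :
    min ((1 - a) / b) ((1 - b) / a) = (1 - a) / b :=
  min_eq_left <| (div_le_div_iff₀ hb ha).2 (by linarith)

theorem min_one_sub_div_eq_right (ha : 0 < a) (hb : 0 < b) (h : b * (1 - b) ≤ a * (1 - a)) :
    min ((1 - a) / b) ((1 - b) / a) = (1 - b) / a := by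
  rw [min_comm]
  exact min_one_sub_div_eq_left hb ha h

noncomputable def innerIntegralLow (a : ℝ) : ℝ :=
  5 / 8 * a - 1 / 3 * a ^ 2 + (1 - a) / 4 * (log 2 - log a) + (1 - a) / 2 * log (1 - a)

noncomputable def innerIntegralHigh (a : ℝ) : ℝ :=
  (1 - a) ^ 2 * ((7 + a - 8 * a ^ 2) / (12 * a) + log a + (log 2 - log (1 - a)) / 2)

theorem hasIntervalIntegral_integrandA_of_le_half (ha : 0 < a) (ha₂ : a ≤ 1 / 2) :
    HasIntervalIntegral (integrandA a) 0 1 (innerIntegralLow a) := by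
  have hmin : min (1 / 2 : ℝ) (1 - a) = 1 / 2 := min_eq_left (by linarith)
  have h₁ := (hasIntervalIntegral_mul_one_sub (1 / (4 * a)) 0 a).congr_Ioc (f := integrandA a)
    ha.le fun b ⟨hb, hba⟩ ↦ by
      rw [integrandA, hmin, min_eq_left (by linarith), min_one_sub_div_eq_right ha hb (by nlinarith)]
      ring
  have h₂ := (hasIntervalIntegral_div ((1 - a) / 4) ha ha₂).congr_Ioc (f := integrandA a)
    ha₂ fun b ⟨hab, hb⟩ ↦ by
      rw [integrandA, hmin, min_eq_left (by linarith),
        min_one_sub_div_eq_left ha (by linarith) (by nlinarith)]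
      ring
  have h₃ := (hasIntervalIntegral_mul_one_sub_div ((1 - a) / 2) one_half_pos
    (by linarith : (1 / 2 : ℝ) ≤ 1 - a)).congr_Ioc (f := integrandA a) (by linarith)
    fun b ⟨hb, hba⟩ ↦ by
      rw [integrandA, hmin, min_eq_right (by linarith),
        min_one_sub_div_eq_left ha (by linarith) (by nlinarith)]
      ring
  have h₄ := (hasIntervalIntegral_mul_one_sub_sq (1 / (2 * a)) (1 - a) 1).congr_Ioc
    (f := integrandA a) (by linarith) fun b ⟨hab, hb⟩ ↦ by
      rw [integrandA, hmin, min_eq_right (by linarith),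
        min_one_sub_div_eq_right ha (by linarith) (by nlinarith)]
      ring
  convert ((h₁.add_adjacent h₂).add_adjacent h₃).add_adjacent h₄ using 1
  rw [innerIntegralLow, log_half]
  field_simp
  ring

theorem hasIntervalIntegral_integrandA_of_half_lt (ha₂ : 1 / 2 < a) (ha₁ : a ≤ 1) :
    HasIntervalIntegral (integrandA a) 0 1 (innerIntegralHigh a) := by
  -- for `a = 1` the piece `(1 - a, 1/2]` would reach the pole of `c / b`
  rcases ha₁.eq_or_lt with rfl | ha₁
  · refine ⟨intervalIntegrable_const (c := 0) |>.congr fun b _ ↦ ?_, ?_⟩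
    · simp [integrandA]
    · simp [integrandA, innerIntegralHigh]
  have ha : 0 < a := by linarith
  have hmin : min (1 / 2 : ℝ) (1 - a) = 1 - a := min_eq_right (by linarith)
  have h₁ := (hasIntervalIntegral_mul_one_sub ((1 - a) / (2 * a)) 0 (1 - a)).congr_Ioc
    (f := integrandA a) (by linarith) fun b ⟨hb, hba⟩ ↦ by
      rw [integrandA, hmin, min_eq_left (by linarith), min_one_sub_div_eq_right ha hb (by nlinarith)]
      ring
  have h₂ := (hasIntervalIntegral_div ((1 - a) ^ 2 / 2) (by linarith : 0 < 1 - a)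
    (by linarith : 1 - a ≤ 1 / 2)).congr_Ioc (f := integrandA a) (by linarith) fun b ⟨hab, hb⟩ ↦ by
      rw [integrandA, hmin, min_eq_left (by linarith),
        min_one_sub_div_eq_left ha (by linarith) (by nlinarith)]
      ring
  have h₃ := (hasIntervalIntegral_mul_one_sub_div ((1 - a) ^ 2) one_half_pos
    ha₂.le).congr_Ioc (f := integrandA a) ha₂.le fun b ⟨hb, hba⟩ ↦ by
      rw [integrandA, hmin, min_eq_right (by linarith),
        min_one_sub_div_eq_left ha (by linarith) (by nlinarith)]
      ring
  have h₄ := (hasIntervalIntegral_mul_one_sub_sq ((1 - a) / a) a 1).congr_Ioc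
    (f := integrandA a) ha₁.le fun b ⟨hab, hb⟩ ↦ by
      rw [integrandA, hmin, min_eq_right (by linarith),
        min_one_sub_div_eq_right ha (by linarith) (by nlinarith)]
      ring
  convert ((h₁.add_adjacent h₂).add_adjacent h₃).add_adjacent h₄ using 1
  rw [innerIntegralHigh, log_half]
  field_simp
  ring

end InnerIntegral

theorem intervalIntegrable_log_one_sub (l r : ℝ) :
    IntervalIntegrable (fun x ↦ log (1 - x)) volume l r := by
  simpa using (intervalIntegral.intervalIntegrable_log' (a := 1 - l) (b := 1 - r)).comp_sub_left 1

noncomputable def innerIntegralLowAntideriv (a : ℝ) : ℝ :=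
  5 / 16 * a ^ 2 - 1 / 9 * a ^ 3 + (a - a ^ 2 / 2) * log 2 / 4 - (1 - a / 2) * (a * log a) / 4
    + (a - a ^ 2 / 4) / 4 - (1 - a) * ((1 - a) * log (1 - a)) / 4 + (1 - a) ^ 2 / 8

noncomputable def innerIntegralHighAntideriv (a : ℝ) : ℝ :=
  (11 / 12 - (1 - a) ^ 3 / 3) * log a - 13 / 12 * a - a ^ 2 / 8 + 17 / 36 * a ^ 3 - a ^ 4 / 6
    - a + a ^ 2 / 2 - a ^ 3 / 9 - (1 - a) ^ 3 * log 2 / 6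
    + (1 - a) ^ 2 * ((1 - a) * log (1 - a)) / 6 - (1 - a) ^ 3 / 18

theorem hasDerivAt_innerIntegralLowAntideriv {x : ℝ} (hx₀ : 0 < x) (hx₁ : x < 1) :
    HasDerivAt innerIntegralLowAntideriv (innerIntegralLow x) x := by
  have hsub : HasDerivAt (fun a : ℝ ↦ 1 - a) (-1) x := (hasDerivAt_id x).const_sub 1
  have hmul_log := hasDerivAt_mul_log hx₀.ne'
  have hmul_log_sub : HasDerivAt (fun a : ℝ ↦ (1 - a) * log (1 - a)) ((log (1 - x) + 1) * -1) x :=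
    (hasDerivAt_mul_log (by linarith : 1 - x ≠ 0)).comp x hsub
  have h := ((((((((hasDerivAt_pow 2 x).const_mul (5 / 16 : ℝ)).sub
    ((hasDerivAt_pow 3 x).const_mul (1 / 9 : ℝ))).add
    ((((hasDerivAt_id x).sub ((hasDerivAt_pow 2 x).div_const 2)).mul_const (log 2)).div_const 4)).sub
    ((((hasDerivAt_id x).div_const 2).const_sub 1).mul hmul_log |>.div_const 4)).add
    (((hasDerivAt_id x).sub ((hasDerivAt_pow 2 x).div_const 4)).div_const 4)).sub
    ((hsub.mul hmul_log_sub).div_const 4)).add ((hsub.pow 2).div_const 8))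
  refine h.congr_deriv ?_
  simp only [innerIntegralLow, id_eq]
  push_cast
  ring

theorem hasDerivAt_innerIntegralHighAntideriv {x : ℝ} (hx₀ : 0 < x) (hx₁ : x < 1) :
    HasDerivAt innerIntegralHighAntideriv (innerIntegralHigh x) x := by
  have hsub : HasDerivAt (fun a : ℝ ↦ 1 - a) (-1) x := (hasDerivAt_id x).const_sub 1
  have hmul_log_sub : HasDerivAt (fun a : ℝ ↦ (1 - a) * log (1 - a)) ((log (1 - x) + 1) * -1) x :=
    (hasDerivAt_mul_log (by linarith : 1 - x ≠ 0)).comp x hsub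
  have h := (((((((((((((hsub.pow 3).div_const 3).const_sub (11 / 12 : ℝ)).mul
    (hasDerivAt_log hx₀.ne')).sub ((hasDerivAt_id x).const_mul (13 / 12 : ℝ))).sub
    ((hasDerivAt_pow 2 x).div_const 8)).add ((hasDerivAt_pow 3 x).const_mul (17 / 36 : ℝ))).sub
    ((hasDerivAt_pow 4 x).div_const 6)).sub (hasDerivAt_id x)).add
    ((hasDerivAt_pow 2 x).div_const 2)).sub ((hasDerivAt_pow 3 x).div_const 9)).sub
    (((hsub.pow 3).mul_const (log 2)).div_const 6)).add
    (((hsub.pow 2).mul hmul_log_sub).div_const 6)).sub ((hsub.pow 3).div_const 18)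
  refine h.congr_deriv ?_
  simp only [innerIntegralHigh, Pi.pow_apply]
  push_cast
  field_simp
  ring

theorem hasIntervalIntegral_innerIntegralLow :
    HasIntervalIntegral innerIntegralLow 0 (1 / 2) (log 2 / 4 + 23 / 288) := by
  have hint : IntervalIntegrable innerIntegralLow volume 0 (1 / 2) := by
    unfold innerIntegralLow
    refine ((Continuous.intervalIntegrable (by fun_prop) _ _).add ?_).add ?_
    · exact (intervalIntegrable_const.sub intervalIntegral.intervalIntegrable_log').continuousOn_mul
        (by fun_prop)
    · exact (intervalIntegrable_log_one_sub _ _).continuousOn_mul (by fun_prop)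
  have h := hasIntervalIntegral_of_hasDerivAt (by norm_num)
    (by unfold innerIntegralLowAntideriv; fun_prop : Continuous innerIntegralLowAntideriv).continuousOn
    (fun x hx ↦ hasDerivAt_innerIntegralLowAntideriv hx.1 (by linarith [hx.2])) hint
  convert h using 1
  norm_num [innerIntegralLowAntideriv]
  rw [log_half]
  ring

theorem hasIntervalIntegral_innerIntegralHigh :
    HasIntervalIntegral innerIntegralHigh (1 / 2) 1 (11 / 12 * log 2 - 19 / 32) := by
  have hrat : ContinuousOn (fun a : ℝ ↦ (7 + a - 8 * a ^ 2) / (12 * a)) (uIcc (1 / 2) 1) := by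
    refine ContinuousOn.div (by fun_prop) (by fun_prop) fun x hx ↦ ?_
    rw [uIcc_of_le (by norm_num)] at hx
    linarith [hx.1]
  have hint : IntervalIntegrable innerIntegralHigh volume (1 / 2) 1 := by
    unfold innerIntegralHigh
    refine IntervalIntegrable.continuousOn_mul ?_ (by fun_prop)
    refine (hrat.intervalIntegrable.add intervalIntegral.intervalIntegrable_log').add ?_
    exact (intervalIntegrable_const.sub
      (intervalIntegrable_log_one_sub _ _)).div_const 2
  have hlog : ContinuousOn log (Icc (1 / 2 : ℝ) 1) :=
    continuousOn_log.mono fun x hx ↦ (one_half_pos.trans_le hx.1).ne'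
  have h := hasIntervalIntegral_of_hasDerivAt (by norm_num) (by unfold innerIntegralHighAntideriv; fun_prop)
    (fun x hx ↦ hasDerivAt_innerIntegralHighAntideriv (by linarith [hx.1]) hx.2) hint
  convert h using 1
  norm_num [innerIntegralHighAntideriv]
  rw [log_half]
  ring

theorem integral_A :
    ∫ a in Set.Ioc (0:ℝ) 1, ∫ b in Set.Ioc (0:ℝ) 1,
        min (1/2) (1 - a) * min (1/2) (1 - b) * min ((1 - a) / b) ((1 - b) / a)
      = (7/6) * Real.log 2 - 37/72 := by
  have hleft := hasIntervalIntegral_innerIntegralLow.congr_Ioc (f := fun a ↦ ∫ b in 0..1, integrandA a b)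
    (by norm_num) fun a ha ↦ (hasIntervalIntegral_integrandA_of_le_half ha.1 ha.2).2
  have hright := hasIntervalIntegral_innerIntegralHigh.congr_Ioc
    (f := fun a ↦ ∫ b in 0..1, integrandA a b) (by norm_num) fun a ha ↦
      (hasIntervalIntegral_integrandA_of_half_lt ha.1 ha.2).2
  simp_rw [← intervalIntegral.integral_of_le zero_le_one]
  exact (hleft.add_adjacent hright).2.trans (by ring)
end

section
/- The double integral over (0,1]² of (min(1/2, 1−a) + min(1/2, 1−b))·min((1−a)/b, (1−b)/a) da db equals (19/6)log 2 − 11/12. -/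
/-!
For fixed `a`, `(1 - a) / b ≤ (1 - b) / a` exactly when `b (1 - b) ≤ a (1 - a)`, i.e. when
`|b - 1/2| ≤ |a - 1/2|`. So with `d = |a - 1/2|` the inner integrand is elementary on each of
`(0, 1/2 - d)`, `(1/2 - d, 1/2)`, `(1/2, 1/2 + d)`, `(1/2 + d, 1)`, and the inner integral is an
explicit combination of polynomials, `1/a`, `log a` and `log (1 - a)`, with one closed form for
`a ≤ 1/2` and another for `a ≥ 1/2`. The outer integral is then computed from explicit primitives
of these two closed forms.
-/

open Real MeasureTheory Set intervalIntegral

section FTC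

variable {E : Type*} [NormedAddCommGroup E] [NormedSpace ℝ E] [CompleteSpace E]

theorem integral_eq_sub_of_eqOn_Ioo {f g G : ℝ → E} {u v : ℝ} (huv : u ≤ v)
    (hfg : EqOn f g (Ioo u v)) (hG : ContinuousOn G (Icc u v))
    (hGg : ∀ x ∈ Ioo u v, HasDerivAt G (g x) x) (hg : IntervalIntegrable g volume u v) :
    IntervalIntegrable f volume u v ∧ ∫ x in u..v, f x = G v - G u := by
  rw [← uIoo_of_le huv] at hfg
  exact ⟨(intervalIntegrable_congr_uIoo hfg).2 hg,
    (integral_congr_uIoo hfg).trans (integral_eq_sub_of_hasDerivAt_of_le huv hG hGg hg)⟩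

theorem integral_eq_sub_of_eqOn_Ioo_of_continuousOn {f g G : ℝ → E} {u v : ℝ} (huv : u ≤ v)
    (hfg : EqOn f g (Ioo u v)) (hGg : ∀ x ∈ Icc u v, HasDerivAt G (g x) x)
    (hg : ContinuousOn g (Icc u v)) :
    IntervalIntegrable f volume u v ∧ ∫ x in u..v, f x = G v - G u :=
  integral_eq_sub_of_eqOn_Ioo huv hfg (HasDerivAt.continuousOn hGg)
    (fun x hx => hGg x (Ioo_subset_Icc_self hx)) (hg.intervalIntegrable_of_Icc huv)

end FTC

theorem hasDerivAt_cubic (c₀ c₁ c₂ c₃ x : ℝ) :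
    HasDerivAt (fun y => c₀ + c₁ * y + c₂ * y ^ 2 + c₃ * y ^ 3)
      (c₁ + 2 * c₂ * x + 3 * c₃ * x ^ 2) x := by
  refine ((((hasDerivAt_const x c₀).add ((hasDerivAt_id x).const_mul c₁)).add
      ((hasDerivAt_pow 2 x).const_mul c₂)).add ((hasDerivAt_pow 3 x).const_mul c₃)).congr_deriv ?_
  push_cast
  ring

theorem hasDerivAt_mul_log_sub_mul (p q : ℝ) {x : ℝ} (hx : x ≠ 0) :
    HasDerivAt (fun y => p * log y - q * y) (p / x - q) x := by
  refine (((hasDerivAt_log hx).const_mul p).sub ((hasDerivAt_id x).const_mul q)).congr_deriv ?_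
  ring

theorem hasDerivAt_one_sub_mul_log {x : ℝ} (hx : x ≠ 1) :
    HasDerivAt (fun y => (1 - y) * log (1 - y)) (-(log (1 - x) + 1)) x := by
  refine ((hasDerivAt_mul_log (sub_ne_zero.2 hx.symm)).comp x
    ((hasDerivAt_id x).const_sub 1)).congr_deriv ?_
  ring

theorem log_one_half : log (1/2 : ℝ) = -log 2 := by
  rw [one_div, log_inv]

theorem min_div_eq_right_of_abs_le {a b : ℝ} (ha : 0 < a) (hb : 0 < b)
    (h : |a - 1/2| ≤ |b - 1/2|) : min ((1 - a) / b) ((1 - b) / a) = (1 - b) / a := by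
  refine min_eq_right ((div_le_div_iff₀ ha hb).2 ?_)
  nlinarith [sq_le_sq.2 h]

theorem min_div_eq_left_of_abs_le {a b : ℝ} (ha : 0 < a) (hb : 0 < b)
    (h : |b - 1/2| ≤ |a - 1/2|) : min ((1 - a) / b) ((1 - b) / a) = (1 - a) / b := by
  rw [min_comm]
  exact min_div_eq_right_of_abs_le hb ha h

noncomputable def integrand (a b : ℝ) : ℝ :=
  (min (1/2) (1 - a) + min (1/2) (1 - b)) * min ((1 - a) / b) ((1 - b) / a)

theorem integrand_eqOn_Ioo_zero {a c d : ℝ} (ha : 0 < a) (hc : min (1/2) (1 - a) = c)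
    (hd : |a - 1/2| = d) :
    EqOn (integrand a) (fun b => (c + 1/2) * ((1 - b) / a)) (Ioo 0 (1/2 - d)) := by
  rintro b ⟨hb₀, hb⟩
  have hd₀ : 0 ≤ d := hd ▸ abs_nonneg _
  have hab : |a - 1/2| ≤ |b - 1/2| := hd ▸ le_abs.2 (Or.inr (by linarith))
  rw [integrand, hc, min_eq_left (by linarith), min_div_eq_right_of_abs_le ha hb₀ hab]

theorem integrand_eqOn_Ioo_half_sub {a c d : ℝ} (ha₀ : 0 < a) (ha₁ : a < 1)
    (hc : min (1/2) (1 - a) = c) (hd : |a - 1/2| = d) :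
    EqOn (integrand a) (fun b => (c + 1/2) * ((1 - a) / b)) (Ioo (1/2 - d) (1/2)) := by
  rintro b ⟨hb₁, hb₂⟩
  have hd₁ : d < 1/2 := hd ▸ abs_sub_lt_iff.2 ⟨by linarith, by linarith⟩
  have hba : |b - 1/2| ≤ |a - 1/2| := hd ▸ abs_le.2 ⟨by linarith, by linarith⟩
  rw [integrand, hc, min_eq_left (by linarith),
    min_div_eq_left_of_abs_le ha₀ (by linarith) hba]

theorem integrand_eqOn_Ioo_half_add {a c d : ℝ} (ha : 0 < a) (hc : min (1/2) (1 - a) = c)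
    (hd : |a - 1/2| = d) :
    EqOn (integrand a) (fun b => (c + 1 - b) * ((1 - a) / b)) (Ioo (1/2) (1/2 + d)) := by
  rintro b ⟨hb₁, hb₂⟩
  have hba : |b - 1/2| ≤ |a - 1/2| := hd ▸ abs_le.2 ⟨by linarith, by linarith⟩
  rw [integrand, hc, min_eq_right (by linarith), min_div_eq_left_of_abs_le ha (by linarith) hba]
  ring

theorem integrand_eqOn_Ioo_one {a c d : ℝ} (ha : 0 < a) (hc : min (1/2) (1 - a) = c)
    (hd : |a - 1/2| = d) :
    EqOn (integrand a) (fun b => (c + 1 - b) * ((1 - b) / a)) (Ioo (1/2 + d) 1) := by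
  rintro b ⟨hb, -⟩
  have hd₀ : 0 ≤ d := hd ▸ abs_nonneg _
  have hab : |a - 1/2| ≤ |b - 1/2| := hd ▸ le_abs.2 (Or.inl (by linarith))
  rw [integrand, hc, min_eq_right (by linarith),
    min_div_eq_right_of_abs_le ha (by linarith) hab]
  ring

theorem integral_integrand {a c d : ℝ} (ha₀ : 0 < a) (ha₁ : a < 1)
    (hc : min (1/2) (1 - a) = c) (hd : |a - 1/2| = d) :
    ∫ b in Ioc 0 1, integrand a b =
      (c + 1/2) * ((1/2 - d) - (1/2 - d) ^ 2 / 2) / a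
      + (c + 1/2) * (1 - a) * (log (1/2) - log (1/2 - d))
      + (1 - a) * ((c + 1) * (log (1/2 + d) - log (1/2)) - d)
      + ((c + 1) * (1 - (1/2 + d)) - (c + 2) * (1 - (1/2 + d) ^ 2) / 2
          + (1 - (1/2 + d) ^ 3) / 3) / a := by
  have hd₀ : 0 ≤ d := hd ▸ abs_nonneg _
  have hd₁ : d < 1/2 := hd ▸ abs_sub_lt_iff.2 ⟨by linarith, by linarith⟩
  have hpos : ∀ x ∈ Icc (1/2 - d) (1/2 + d), x ≠ 0 := fun x hx => by linarith [hx.1]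
  obtain ⟨hint₁, hval₁⟩ := integral_eq_sub_of_eqOn_Ioo_of_continuousOn (by linarith)
    (integrand_eqOn_Ioo_zero ha₀ hc hd)
    (fun x _ => (hasDerivAt_cubic 0 ((c + 1/2) / a) (-(c + 1/2) / (2 * a)) 0 x).congr_deriv
      (by field_simp; ring))
    (by fun_prop)
  obtain ⟨hint₂, hval₂⟩ := integral_eq_sub_of_eqOn_Ioo_of_continuousOn (by linarith)
    (integrand_eqOn_Ioo_half_sub ha₀ ha₁ hc hd)
    (fun x hx => (hasDerivAt_mul_log_sub_mul ((c + 1/2) * (1 - a)) 0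
      (hpos x ⟨hx.1, by linarith [hx.2]⟩)).congr_deriv (by ring))
    (by fun_prop (disch := rintro x ⟨hx, -⟩; apply ne_of_gt; linarith))
  obtain ⟨hint₃, hval₃⟩ := integral_eq_sub_of_eqOn_Ioo_of_continuousOn (by linarith)
    (integrand_eqOn_Ioo_half_add ha₀ hc hd)
    (fun x hx => by
      have hx₀ := hpos x ⟨by linarith [hx.1], hx.2⟩
      exact (hasDerivAt_mul_log_sub_mul ((c + 1) * (1 - a)) (1 - a) hx₀).congr_deriv
        (by field_simp))
    (by fun_prop (disch := rintro x ⟨hx, -⟩; apply ne_of_gt; linarith))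
  obtain ⟨hint₄, hval₄⟩ := integral_eq_sub_of_eqOn_Ioo_of_continuousOn (by linarith)
    (integrand_eqOn_Ioo_one ha₀ hc hd)
    (fun x _ => (hasDerivAt_cubic 0 ((c + 1) / a) (-(c + 2) / (2 * a)) (1 / (3 * a)) x).congr_deriv
      (by field_simp; ring))
    (by fun_prop)
  rw [← integral_of_le zero_le_one,
    ← integral_add_adjacent_intervals (hint₁.trans (hint₂.trans hint₃)) hint₄,
    ← integral_add_adjacent_intervals (hint₁.trans hint₂) hint₃,
    ← integral_add_adjacent_intervals hint₁ hint₂, hval₁, hval₂, hval₃, hval₄]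
  field_simp
  ring

noncomputable def innerLow (a : ℝ) : ℝ :=
  1/2 + 5 * a / 4 - 2/3 * a ^ 2 + 1/2 * (1 - a) * log 2 + 3/2 * ((1 - a) * log (1 - a))
    - (1 - a) * log a

noncomputable def innerHigh (a : ℝ) : ℝ :=
  19 / (12 * a) - 5/2 + a / 4 + 2/3 * a ^ 2 + 1/2 * (1 - a) * log 2 + (1 - a) * (2 - a) * log a
    - (3/2 - a) * ((1 - a) * log (1 - a))

theorem integral_integrand_of_le_half {a : ℝ} (ha₀ : 0 < a) (ha : a ≤ 1/2) :
    ∫ b in Ioc 0 1, integrand a b = innerLow a := by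
  rw [integral_integrand ha₀ (by linarith) (min_eq_left (by linarith))
    (abs_of_nonpos (by linarith)), log_one_half, innerLow]
  field_simp
  ring_nf

theorem integral_integrand_of_half_le {a : ℝ} (ha : 1/2 ≤ a) (ha₁ : a < 1) :
    ∫ b in Ioc 0 1, integrand a b = innerHigh a := by
  rw [integral_integrand (by linarith) ha₁ (min_eq_right (by linarith))
    (abs_of_nonneg (by linarith)), log_one_half, innerHigh]
  field_simp
  ring_nf

-- `log` enters only through `x * log x` and `(1 - x) * log (1 - x)`, which are continuous on `ℝ`:
-- this keeps the primitive continuous at `0`, where `innerLow` is unbounded.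
noncomputable def innerLowPrimitive (x : ℝ) : ℝ :=
  3/8 + (3/4 + log 2 / 2) * x + (3/4 - log 2 / 4) * x ^ 2 + -(2/9) * x ^ 3
    + (x / 2 - 1) * (x * log x) + -(3/4) * (1 - x) * ((1 - x) * log (1 - x))

noncomputable def innerHighPrimitive (x : ℝ) : ℝ :=
  -17/72 + (-(47/12) + log 2 / 2) * x + (5/12 - log 2 / 4) * x ^ 2 + 2/9 * x ^ 3
    + (19/12 + 2 * x + -(3/2) * x ^ 2 + 1/3 * x ^ 3) * log x
    + ((1 - x) ^ 2 / 3 + (1 - x) / 4) * ((1 - x) * log (1 - x))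

theorem hasDerivAt_innerLowPrimitive {x : ℝ} (hx₀ : 0 < x) (hx₁ : x < 1) :
    HasDerivAt innerLowPrimitive (innerLow x) x := by
  have hM := hasDerivAt_mul_log hx₀.ne'
  have hN := hasDerivAt_one_sub_mul_log hx₁.ne
  have hc := hasDerivAt_cubic (3/8) (3/4 + log 2/2) (3/4 - log 2/4) (-(2/9)) x
  have hl₁ : HasDerivAt (fun y : ℝ => y / 2 - 1) (1/2) x :=
    ((hasDerivAt_id x).div_const 2).sub_const 1
  have hl₂ : HasDerivAt (fun y : ℝ => -(3/4) * (1 - y)) (-(3/4) * (-1)) x :=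
    ((hasDerivAt_id x).const_sub 1).const_mul _
  refine ((hc.add (hl₁.mul hM)).add (hl₂.mul hN)).congr_deriv ?_
  simp only [innerLow]
  ring

theorem hasDerivAt_innerHighPrimitive {x : ℝ} (hx₀ : 0 < x) (hx₁ : x < 1) :
    HasDerivAt innerHighPrimitive (innerHigh x) x := by
  have hL := hasDerivAt_log hx₀.ne'
  have hN := hasDerivAt_one_sub_mul_log hx₁.ne
  have hc := hasDerivAt_cubic (-17/72) (-(47/12) + log 2/2) (5/12 - log 2/4) (2/9) x
  have hp := hasDerivAt_cubic (19/12) 2 (-(3/2)) (1/3) x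
  have hq : HasDerivAt (fun y : ℝ => (1 - y) ^ 2 / 3 + (1 - y) / 4)
      (2 * (1 - x) * (-1) / 3 + (-1) / 4) x := by
    have h := (hasDerivAt_id x).const_sub 1
    refine (((h.pow 2).div_const 3).add (h.div_const 4)).congr_deriv ?_
    simp only [id]
    push_cast
    ring
  refine ((hc.add (hp.mul hL)).add (hq.mul hN)).congr_deriv ?_
  simp only [innerHigh]
  field_simp
  ring

theorem continuous_innerLowPrimitive : Continuous innerLowPrimitive := by
  unfold innerLowPrimitive
  fun_prop

theorem continuousOn_innerHighPrimitive : ContinuousOn innerHighPrimitive (Icc (1/2) 1) := by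
  unfold innerHighPrimitive
  fun_prop (disch := rintro x ⟨hx, -⟩; apply ne_of_gt; linarith)

theorem intervalIntegrable_innerLow : IntervalIntegrable innerLow volume 0 (1/2) :=
  (Continuous.intervalIntegrable (by fun_prop) _ _).sub
    (intervalIntegrable_log'.continuousOn_mul (by fun_prop))

theorem intervalIntegrable_innerHigh : IntervalIntegrable innerHigh volume (1/2) 1 := by
  refine ContinuousOn.intervalIntegrable_of_Icc (by norm_num) ?_
  unfold innerHigh
  fun_prop (disch := rintro x ⟨hx, -⟩; apply ne_of_gt; linarith)

theorem integral_B :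
    ∫ a in Set.Ioc (0:ℝ) 1, ∫ b in Set.Ioc (0:ℝ) 1,
        (min (1/2) (1 - a) + min (1/2) (1 - b)) * min ((1 - a) / b) ((1 - b) / a)
      = (19/6) * Real.log 2 - 11/12 := by
  change ∫ a in Ioc (0:ℝ) 1, ∫ b in Ioc (0:ℝ) 1, integrand a b = _
  obtain ⟨hint₁, hval₁⟩ := integral_eq_sub_of_eqOn_Ioo (by norm_num : (0:ℝ) ≤ 1/2)
    (fun a ha => integral_integrand_of_le_half ha.1 ha.2.le)
    continuous_innerLowPrimitive.continuousOn
    (fun x hx => hasDerivAt_innerLowPrimitive hx.1 (by linarith [hx.2]))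
    intervalIntegrable_innerLow
  obtain ⟨hint₂, hval₂⟩ := integral_eq_sub_of_eqOn_Ioo (by norm_num : (1/2:ℝ) ≤ 1)
    (fun a ha => integral_integrand_of_half_le ha.1.le ha.2)
    continuousOn_innerHighPrimitive
    (fun x hx => hasDerivAt_innerHighPrimitive (by linarith [hx.1]) hx.2)
    intervalIntegrable_innerHigh
  rw [← integral_of_le zero_le_one, ← integral_add_adjacent_intervals hint₁ hint₂, hval₁, hval₂]
  norm_num [innerLowPrimitive, innerHighPrimitive, log_one_half]
  ring
end

section
/- Let c be the multiplicative function with c(2^k)=k and c(p^k)=1+k−k/p for odd primes p. Then for Re(s) > 1, ∑_{n=1}^{∞} c(n) n^{−s} = ((4^s − 2^s + 1)/(4^s − 2^{s−1})) · ζ(s)²/ζ(s+1). -/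
/-!
At an odd prime `p` the Euler factor `∑ₖ c(pᵏ) xᵏ` of `c` is `(1 - x/p) / (1 - x)²`, the Euler
factor of `ζ(s)² / ζ(s + 1)`, which is the L-series of `(μ(n) / n) * 1 * 1`. At `2` it is
`(1 - x + x²) / (1 - x)²` instead, off by the factor `(1 - x + x²) / (1 - x/2)`. So
`c = T * (μ(n) / n) * 1 * 1`, where `T` is supported on powers of `2` with generating function
`(1 - x + x²) / (1 - x/2)`; at `x = 2⁻ˢ` this is `(4ˢ - 2ˢ + 1) / (4ˢ - 2ˢ⁻¹)`.
-/

open ArithmeticFunction LSeries Complex Finset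
open scoped ArithmeticFunction.Moebius ArithmeticFunction.zeta LSeries.notation

namespace ArithmeticFunction

variable {R : Type*}

lemma toArithmeticFunction_apply_of_ne_zero [Zero R] {f : ℕ → R} {n : ℕ} (hn : n ≠ 0) :
    toArithmeticFunction f n = f n :=
  if_neg hn

lemma isMultiplicative_toArithmeticFunction [MonoidWithZero R] {f : ℕ → R} (h₁ : f 1 = 1)
    (hmul : ∀ m n, m.Coprime n → f (m * n) = f m * f n) :
    (toArithmeticFunction f).IsMultiplicative := by
  refine IsMultiplicative.iff_ne_zero.2 ⟨?_, fun {m n} hm hn hmn => ?_⟩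
  · rw [toArithmeticFunction_apply_of_ne_zero one_ne_zero, h₁]
  · rw [toArithmeticFunction_apply_of_ne_zero hm, toArithmeticFunction_apply_of_ne_zero hn,
      toArithmeticFunction_apply_of_ne_zero (mul_ne_zero hm hn), hmul m n hmn]

lemma mul_apply_prime_pow [Semiring R] (f g : ArithmeticFunction R) {p : ℕ} (hp : p.Prime)
    (k : ℕ) : (f * g) (p ^ k) = ∑ i ∈ range (k + 1), f (p ^ i) * g (p ^ (k - i)) := by
  rw [mul_apply, Nat.sum_divisorsAntidiagonal (f := fun a b => f a * g b),
    Nat.sum_divisors_prime_pow hp]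
  exact sum_congr rfl fun i hi => by rw [Nat.pow_div (mem_range_succ_iff.1 hi) hp.pos]

def ofPowers [Zero R] (p : ℕ) (a : ℕ → R) : ArithmeticFunction R :=
  ⟨fun n => if n = p ^ Nat.log p n then a (Nat.log p n) else 0, by simp⟩

section ofPowers

variable {p : ℕ} {a : ℕ → R}

lemma ofPowers_apply [Zero R] (n : ℕ) :
    ofPowers p a n = if n = p ^ Nat.log p n then a (Nat.log p n) else 0 :=
  rfl

lemma ofPowers_apply_pow [Zero R] (hp : 1 < p) (a : ℕ → R) (k : ℕ) :
    ofPowers p a (p ^ k) = a k := by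
  simp [ofPowers, Nat.log_pow hp]

lemma ofPowers_apply_eq_zero [Zero R] {n : ℕ} (h : ∀ k, n ≠ p ^ k) : ofPowers p a n = 0 :=
  if_neg (h _)

lemma ofPowers_apply_eq_zero_of_dvd [Zero R] (hp : p.Prime) {m n : ℕ} (hmn : m ∣ n)
    (hm : ∀ k, m ≠ p ^ k) : ofPowers p a n = 0 :=
  ofPowers_apply_eq_zero fun k hk => by
    obtain ⟨j, -, rfl⟩ := (Nat.dvd_prime_pow hp).1 (hk ▸ hmn)
    exact hm j rfl

lemma isMultiplicative_ofPowers [MonoidWithZero R] (hp : p.Prime) (ha : a 0 = 1) :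
    (ofPowers p a).IsMultiplicative := by
  have h₁ : ofPowers p a 1 = 1 := by simpa [ha] using ofPowers_apply_pow hp.one_lt a 0
  refine ⟨h₁, fun {m n} hmn => ?_⟩
  by_cases hm : ∃ i, m = p ^ i
  · by_cases hn : ∃ j, n = p ^ j
    · obtain ⟨i, rfl⟩ := hm
      obtain ⟨j, rfl⟩ := hn
      rcases i.eq_zero_or_pos with rfl | hi
      · simp [h₁]
      rcases j.eq_zero_or_pos with rfl | hj
      · simp [h₁]
      have := (Nat.coprime_self _).1 <|
        (Nat.coprime_pow_right_iff hj _ _).1 <| (Nat.coprime_pow_left_iff hi _ _).1 hmn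
      exact absurd this hp.one_lt.ne'
    · push Not at hn
      rw [ofPowers_apply_eq_zero hn, ofPowers_apply_eq_zero_of_dvd hp (dvd_mul_left n m) hn,
        mul_zero]
  · push Not at hm
    rw [ofPowers_apply_eq_zero hm, ofPowers_apply_eq_zero_of_dvd hp (dvd_mul_right m n) hm,
      zero_mul]

lemma ofPowers_mul_apply_prime_pow_of_ne [Semiring R] (hp : p.Prime) (ha : a 0 = 1)
    (f : ArithmeticFunction R) {q : ℕ} (hq : q.Prime) (hqp : q ≠ p) (k : ℕ) :
    (ofPowers p a * f) (q ^ k) = f (q ^ k) := by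
  rw [mul_apply_prime_pow _ _ hq, sum_eq_single 0]
  · simpa [ha] using congrArg (· * f (q ^ k)) (ofPowers_apply_pow hp.one_lt a 0)
  · intro i _ hi
    have hq_ne_pow : ∀ j, q ≠ p ^ j := fun j hj =>
      hqp ((Nat.prime_dvd_prime_iff_eq hq hp).1 (hq.dvd_of_dvd_pow (n := j) (hj ▸ dvd_rfl)))
    rw [ofPowers_apply_eq_zero_of_dvd hp (dvd_pow_self q hi) hq_ne_pow, zero_mul]
  · simp

lemma LSeries_ofPowers (hp : 1 < p) (a : ℕ → ℂ) (s : ℂ) :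
    L ↗(ofPowers p a) s = ∑' k, a k * ((p : ℂ) ^ s)⁻¹ ^ k := by
  have hinj : Function.Injective (p ^ · : ℕ → ℕ) := Nat.pow_right_injective hp
  rw [LSeries, ← hinj.tsum_eq]
  · refine tsum_congr fun k => ?_
    rw [term_of_ne_zero (pow_ne_zero _ (by omega)), ofPowers_apply_pow hp, Nat.cast_pow,
      ← natCast_cpow_natCast_mul, cpow_nat_mul, div_eq_mul_inv, inv_pow]
  · intro n hn
    by_contra h
    exact hn (by rw [term_def, ofPowers_apply_eq_zero fun k hk => h ⟨k, hk.symm⟩]; simp)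

lemma LSeriesSummable_ofPowers {a : ℕ → ℂ} {C : ℝ} (ha : ∀ k, ‖a k‖ ≤ C) {s : ℂ}
    (hs : 1 < s.re) : LSeriesSummable ↗(ofPowers p a) s := by
  refine LSeriesSummable_of_bounded_of_one_lt_re (m := C) (fun n _ => ?_) hs
  rw [ofPowers_apply]
  split_ifs
  · exact ha _
  · simpa using (norm_nonneg _).trans (ha 0)

end ofPowers

noncomputable def moebiusDiv : ArithmeticFunction ℂ :=
  pdiv ↑μ ↑ArithmeticFunction.id

lemma moebiusDiv_apply (n : ℕ) : moebiusDiv n = μ n / n := by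
  simp [moebiusDiv]

lemma isMultiplicative_moebiusDiv : moebiusDiv.IsMultiplicative :=
  isMultiplicative_moebius.intCast.pdiv isMultiplicative_id.natCast

lemma term_moebiusDiv (s : ℂ) : term ↗moebiusDiv s = term ↗μ (s + 1) := by
  ext n
  rcases eq_or_ne n 0 with rfl | hn
  · simp
  rw [term_of_ne_zero hn, term_of_ne_zero hn, moebiusDiv_apply,
    cpow_add _ _ (Nat.cast_ne_zero.2 hn), cpow_one, div_div, mul_comm (n : ℂ)]

lemma LSeriesSummable_moebiusDiv {s : ℂ} (hs : 0 < s.re) : LSeriesSummable ↗moebiusDiv s := by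
  rw [LSeriesSummable, term_moebiusDiv]
  exact LSeriesSummable_moebius_iff.2 (by simpa using hs)

lemma LSeries_moebiusDiv {s : ℂ} (hs : 0 < s.re) :
    L ↗moebiusDiv s = (riemannZeta (s + 1))⁻¹ := by
  have hs₁ : 1 < (s + 1).re := by simpa using hs
  rw [LSeries, term_moebiusDiv, ← LSeries, ← LSeries_zeta_eq_riemannZeta hs₁]
  exact eq_inv_of_mul_eq_one_right (LSeries_zeta_mul_Lseries_moebius hs₁)

lemma moebiusDiv_mul_zeta_apply_prime_pow {p : ℕ} (hp : p.Prime) (k : ℕ) :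
    (moebiusDiv * ζ) (p ^ (k + 1)) = 1 - (p : ℂ)⁻¹ := by
  rw [coe_mul_zeta_apply, Nat.sum_divisors_prime_pow hp, sum_range_succ', sum_range_succ',
    sum_eq_zero fun i _ => ?_]
  · simp [moebiusDiv_apply, moebius_apply_prime hp, sub_eq_neg_add, neg_div]
  · simp [moebiusDiv_apply, moebius_apply_prime_pow hp]

lemma moebiusDiv_mul_zeta_mul_zeta_apply_prime_pow {p : ℕ} (hp : p.Prime) (k : ℕ) :
    (moebiusDiv * ζ * ζ) (p ^ k) = 1 + k * (1 - (p : ℂ)⁻¹) := by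
  rw [coe_mul_zeta_apply, Nat.sum_divisors_prime_pow hp, sum_range_succ', pow_zero,
    (isMultiplicative_moebiusDiv.mul isMultiplicative_zeta.natCast).map_one]
  simp only [moebiusDiv_mul_zeta_apply_prime_pow hp, sum_const, card_range, nsmul_eq_mul]
  ring

lemma LSeries_natCoe_zeta {s : ℂ} (hs : 1 < s.re) :
    L ↗(ζ : ArithmeticFunction ℂ) s = riemannZeta s := by
  simpa [natCoe_apply] using LSeries_zeta_eq_riemannZeta hs

lemma LSeriesSummable_natCoe_zeta {s : ℂ} (hs : 1 < s.re) :
    LSeriesSummable ↗(ζ : ArithmeticFunction ℂ) s := by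
  simpa [natCoe_apply] using LSeriesSummable_zeta_iff.2 hs

lemma LSeriesSummable_moebiusDiv_mul_zeta_mul_zeta {s : ℂ} (hs : 1 < s.re) :
    LSeriesSummable ↗(moebiusDiv * ζ * ζ) s :=
  LSeriesSummable_mul (LSeriesSummable_mul (LSeriesSummable_moebiusDiv (by linarith))
    (LSeriesSummable_natCoe_zeta hs)) (LSeriesSummable_natCoe_zeta hs)

lemma LSeries_moebiusDiv_mul_zeta_mul_zeta {s : ℂ} (hs : 1 < s.re) :
    L ↗(moebiusDiv * ζ * ζ) s = riemannZeta s ^ 2 / riemannZeta (s + 1) := by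
  have hM := LSeriesSummable_moebiusDiv (s := s) (by linarith)
  have hζ := LSeriesSummable_natCoe_zeta hs
  rw [LSeries_mul' (LSeriesSummable_mul hM hζ) hζ, LSeries_mul' hM hζ,
    LSeries_moebiusDiv (by linarith), LSeries_natCoe_zeta hs]
  ring

/-- The Taylor coefficients of `(1 - x + x²) / (1 - x/2)`. -/
noncomputable def twoCorrectionCoeff : ℕ → ℂ
  | 0 => 1
  | 1 => -1 / 2
  | k + 2 => 3 / 2 ^ (k + 2)

lemma twoCorrectionCoeff_add_two (k : ℕ) : twoCorrectionCoeff (k + 2) = 3 / 2 ^ (k + 2) :=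
  rfl

lemma norm_twoCorrectionCoeff_le_one (k : ℕ) : ‖twoCorrectionCoeff k‖ ≤ 1 := by
  match k with
  | 0 => simp [twoCorrectionCoeff]
  | 1 => norm_num [twoCorrectionCoeff]
  | k + 2 =>
    simp only [twoCorrectionCoeff, norm_div, norm_pow, Complex.norm_ofNat]
    rw [div_le_one (by positivity)]
    calc (3 : ℝ) ≤ 2 ^ 2 := by norm_num
      _ ≤ 2 ^ (k + 2) := pow_le_pow_right₀ one_le_two (by omega)

lemma sum_range_twoCorrectionCoeff (k : ℕ) :
    ∑ i ∈ range (k + 2), twoCorrectionCoeff i = 2 - 3 / 2 ^ (k + 1) := by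
  induction k with
  | zero => norm_num [sum_range_succ, twoCorrectionCoeff]
  | succ k ih =>
    rw [sum_range_succ, ih, twoCorrectionCoeff_add_two]
    field_simp
    ring

lemma sum_range_twoCorrectionCoeff_mul (k : ℕ) :
    ∑ i ∈ range (k + 2), twoCorrectionCoeff i * (1 + ((k + 1 : ℂ) - i) / 2) = k + 1 := by
  induction k with
  | zero => norm_num [sum_range_succ, twoCorrectionCoeff]
  | succ k ih =>
    have hshift : ∀ i ∈ range (k + 2), twoCorrectionCoeff i * (1 + ((k + 1 + 1 : ℂ) - i) / 2) =
        twoCorrectionCoeff i * (1 + ((k + 1 : ℂ) - i) / 2) + twoCorrectionCoeff i / 2 :=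
      fun i _ => by ring
    push_cast
    rw [sum_range_succ, sum_congr rfl hshift, sum_add_distrib, ih, ← sum_div,
      sum_range_twoCorrectionCoeff, twoCorrectionCoeff_add_two]
    push_cast
    field_simp
    ring

lemma hasSum_twoCorrectionCoeff_mul_pow {z : ℂ} (hz : ‖z‖ < 2) :
    HasSum (fun k => twoCorrectionCoeff k * z ^ k) ((1 - z + z ^ 2) / (1 - z / 2)) := by
  have hz₂ : ‖z / 2‖ < 1 := by rw [norm_div, Complex.norm_ofNat]; linarith
  have hne : 2 - z ≠ 0 := fun h => by
    rw [← eq_of_sub_eq_zero h, Complex.norm_ofNat] at hz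
    exact lt_irrefl _ hz
  have hterm : ∀ k, twoCorrectionCoeff (k + 2) * z ^ (k + 2) = 3 * (z / 2) ^ 2 * (z / 2) ^ k :=
    fun k => by rw [twoCorrectionCoeff_add_two, div_pow, div_pow, pow_add, pow_add]; field_simp
  have htail := (hasSum_geometric_of_norm_lt_one hz₂).mul_left (3 * (z / 2) ^ 2)
  simp only [← hterm] at htail
  have hvalue : (1 - z + z ^ 2) / (1 - z / 2) - ∑ i ∈ range 2, twoCorrectionCoeff i * z ^ i =
      3 * (z / 2) ^ 2 * (1 - z / 2)⁻¹ := by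
    simp only [sum_range_succ, sum_range_zero, twoCorrectionCoeff]
    field_simp
    ring
  rw [← hvalue] at htail
  exact (hasSum_nat_add_iff' (f := fun k => twoCorrectionCoeff k * z ^ k) 2).1 htail

noncomputable def twoCorrection : ArithmeticFunction ℂ :=
  ofPowers 2 twoCorrectionCoeff

lemma isMultiplicative_twoCorrection : twoCorrection.IsMultiplicative :=
  isMultiplicative_ofPowers Nat.prime_two rfl

lemma twoCorrection_mul_apply_prime_pow_of_ne {p : ℕ} (hp : p.Prime) (hp₂ : p ≠ 2)
    (f : ArithmeticFunction ℂ) (k : ℕ) : (twoCorrection * f) (p ^ k) = f (p ^ k) :=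
  ofPowers_mul_apply_prime_pow_of_ne Nat.prime_two rfl f hp hp₂ k

lemma twoCorrection_mul_apply_two_pow (k : ℕ) :
    (twoCorrection * (moebiusDiv * ζ * ζ)) (2 ^ (k + 1)) = k + 1 := by
  rw [mul_apply_prime_pow _ _ Nat.prime_two, ← sum_range_twoCorrectionCoeff_mul k]
  refine sum_congr rfl fun i hi => ?_
  rw [twoCorrection, ofPowers_apply_pow one_lt_two, moebiusDiv_mul_zeta_mul_zeta_apply_prime_pow
    Nat.prime_two, Nat.cast_sub (mem_range_succ_iff.1 hi)]
  push_cast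
  ring

lemma LSeriesSummable_twoCorrection {s : ℂ} (hs : 1 < s.re) :
    LSeriesSummable ↗twoCorrection s :=
  LSeriesSummable_ofPowers norm_twoCorrectionCoeff_le_one hs

lemma LSeries_twoCorrection {s : ℂ} (hs : -1 < s.re) :
    L ↗twoCorrection s = (4 ^ s - 2 ^ s + 1) / (4 ^ s - 2 ^ (s - 1)) := by
  rw [twoCorrection, LSeries_ofPowers one_lt_two, Nat.cast_ofNat]
  set y : ℂ := 2 ^ s with hy
  have hy_norm : 1 / 2 < ‖y‖ := by
    have : ‖y‖ = 2 ^ s.re := by simpa using norm_natCast_cpow_of_pos two_pos s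
    rw [this, show (1 / 2 : ℝ) = 2 ^ (-1 : ℝ) by norm_num,
      Real.rpow_lt_rpow_left_iff one_lt_two]
    exact hs
  have hy₀ : y ≠ 0 := fun h => by rw [h, norm_zero] at hy_norm; norm_num at hy_norm
  have h₄ : (4 : ℂ) ^ s = y ^ 2 := by
    rw [show (4 : ℂ) = ((2 : ℕ) : ℂ) ^ 2 by norm_num, ← natCast_cpow_natCast_mul, cpow_nat_mul,
      Nat.cast_ofNat]
  have h₂ : (2 : ℂ) ^ (s - 1) = y / 2 := by
    rw [cpow_sub _ _ two_ne_zero, cpow_one]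
  have hz : ‖y⁻¹‖ < 2 := by
    rw [norm_inv]
    exact inv_lt_of_inv_lt₀ (by norm_num) (by simpa using hy_norm)
  rw [(hasSum_twoCorrectionCoeff_mul_pow hz).tsum_eq, h₄, h₂]
  field_simp

lemma tsum_pnat_div_cpow_eq_LSeries (f : ℕ → ℂ) (s : ℂ) :
    ∑' n : ℕ+, f n / (n : ℂ) ^ s = L ↗(toArithmeticFunction f) s := by
  rw [LSeries, ← tsum_pnat_eq_tsum_of_eq_zero (term_zero _ _)]
  exact tsum_congr fun n => by
    rw [term_of_ne_zero n.ne_zero, toArithmeticFunction_apply_of_ne_zero n.ne_zero]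

lemma toArithmeticFunction_eq_twoCorrection_mul {c : ℕ → ℝ} (hc1 : c 1 = 1)
    (hcmul : ∀ m n : ℕ, m.Coprime n → c (m * n) = c m * c n)
    (hc2 : ∀ k : ℕ, 1 ≤ k → c (2 ^ k) = k)
    (hcp : ∀ p k : ℕ, p.Prime → Odd p → 1 ≤ k → c (p ^ k) = 1 + k - k / p) :
    toArithmeticFunction (fun n => (c n : ℂ)) = twoCorrection * (moebiusDiv * ζ * ζ) := by
  have hC : (toArithmeticFunction fun n => (c n : ℂ)).IsMultiplicative :=
    isMultiplicative_toArithmeticFunction (by simp [hc1]) fun m n h => by simp [hcmul m n h]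
  have hTB := isMultiplicative_twoCorrection.mul
    (isMultiplicative_moebiusDiv.mul isMultiplicative_zeta.natCast |>.mul
      isMultiplicative_zeta.natCast)
  refine (hC.eq_iff_eq_on_prime_powers _ _ hTB).2 fun p k hp => ?_
  rcases k with _ | k
  · simp [hC.map_one, hTB.map_one]
  rw [toArithmeticFunction_apply_of_ne_zero (pow_ne_zero _ hp.ne_zero)]
  rcases eq_or_ne p 2 with rfl | hp₂
  · rw [hc2 _ le_add_self, twoCorrection_mul_apply_two_pow]
    norm_num
  · rw [hcp p _ hp (hp.odd_of_ne_two hp₂) le_add_self,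
      twoCorrection_mul_apply_prime_pow_of_ne hp hp₂,
      moebiusDiv_mul_zeta_mul_zeta_apply_prime_pow hp]
    push_cast
    ring

end ArithmeticFunction

theorem dirichlet_series_c (c : ℕ → ℝ)
    (hc1 : c 1 = 1)
    (hcmul : ∀ m n : ℕ, Nat.Coprime m n → c (m * n) = c m * c n)
    (hc2 : ∀ k : ℕ, 1 ≤ k → c (2 ^ k) = k)
    (hcp : ∀ p k : ℕ, p.Prime → Odd p → 1 ≤ k → c (p ^ k) = 1 + k - k / p)
    (s : ℂ) (hs : 1 < s.re) :
    ∑' n : ℕ+, (c n : ℂ) / (n : ℂ) ^ s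
      = ((4 ^ s - 2 ^ s + 1) / (4 ^ s - 2 ^ (s - 1)))
          * riemannZeta s ^ 2 / riemannZeta (s + 1) := by
  rw [tsum_pnat_div_cpow_eq_LSeries (fun n => (c n : ℂ)),
    toArithmeticFunction_eq_twoCorrection_mul hc1 hcmul hc2 hcp,
    LSeries_mul' (LSeriesSummable_twoCorrection hs)
      (LSeriesSummable_moebiusDiv_mul_zeta_mul_zeta hs),
    LSeries_twoCorrection (by linarith), LSeries_moebiusDiv_mul_zeta_mul_zeta hs]
  ring
end
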